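/- arXiv:2412.02947 — 2 statements merged into one kernel-verified Lean document; each statement's English description precedes it below -/
import Mathlib

section
/- Let x₁, x₂ ∈ ℝ with cos x₁ ≠ 0 and set λ = −cos x₂ / cos x₁. Then (1−λ)³·sin(x₁+x₂) − λ³·sin x₁ + sin x₂ = 0 if and only if sin(x₁+x₂)·[(cos x₁ + cos x₂)³ + cos²x₁ + cos²x₂ − cos x₁·cos x₂·cos(x₁−x₂)] = 0. -/
/-!
Multiplying the cubic coefficient by `cos³ x₁` clears the denominator of `λ`: since
`cos x₁ · λ = -cos x₂`, it becomes `(cos x₁ + cos x₂)³ sin(x₁+x₂) + cos³x₂ sin x₁ + cos³x₁ sin x₂`.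
The last two terms are `sin(x₁+x₂) (cos²x₁ + cos²x₂ - cos x₁ cos x₂ cos(x₁-x₂))`, so the scaled
coefficient is the factored expression, and `cos x₁ ≠ 0` makes the two vanish together.
-/

open Real

theorem cos_pow_three_mul_sin_add_cos_pow_three_mul_sin (x₁ x₂ : ℝ) :
    cos x₂ ^ 3 * sin x₁ + cos x₁ ^ 3 * sin x₂ =
      sin (x₁ + x₂) * (cos x₁ ^ 2 + cos x₂ ^ 2 - cos x₁ * cos x₂ * cos (x₁ - x₂)) := by
  rw [sin_add, cos_sub]
  linear_combination (cos x₁ * cos x₂ ^ 2 * sin x₂) * sin_sq_add_cos_sq x₁ +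
    (cos x₁ ^ 2 * cos x₂ * sin x₁) * sin_sq_add_cos_sq x₂

theorem cos_pow_three_mul_cubic_coefficient {x₁ x₂ lam : ℝ} (hlam : lam * cos x₁ = -cos x₂) :
    cos x₁ ^ 3 * ((1 - lam) ^ 3 * sin (x₁ + x₂) - lam ^ 3 * sin x₁ + sin x₂) =
      sin (x₁ + x₂) * ((cos x₁ + cos x₂) ^ 3 + cos x₁ ^ 2 + cos x₂ ^ 2
        - cos x₁ * cos x₂ * cos (x₁ - x₂)) := by
  have h_one_sub : cos x₁ * (1 - lam) = cos x₁ + cos x₂ := by linear_combination -hlam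
  calc cos x₁ ^ 3 * ((1 - lam) ^ 3 * sin (x₁ + x₂) - lam ^ 3 * sin x₁ + sin x₂)
      = (cos x₁ * (1 - lam)) ^ 3 * sin (x₁ + x₂) - (lam * cos x₁) ^ 3 * sin x₁
          + cos x₁ ^ 3 * sin x₂ := by ring
    _ = (cos x₁ + cos x₂) ^ 3 * sin (x₁ + x₂)
          + (cos x₂ ^ 3 * sin x₁ + cos x₁ ^ 3 * sin x₂) := by
      rw [h_one_sub, hlam]; ring
    _ = _ := by rw [cos_pow_three_mul_sin_add_cos_pow_three_mul_sin]; ring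

/-- With `λ = -cos x₂ / cos x₁` (for `cos x₁ ≠ 0`), the vanishing of the cubic coefficient
`(1-λ)³ sin(x₁+x₂) - λ³ sin x₁ + sin x₂` is equivalent to the factored condition
`sin(x₁+x₂) ((cos x₁ + cos x₂)³ + cos²x₁ + cos²x₂ - cos x₁ cos x₂ cos(x₁-x₂)) = 0`. -/
theorem hex_cubic_coefficient_vanishing_iff (x₁ x₂ : ℝ) (hc : Real.cos x₁ ≠ 0)
    (lam : ℝ) (hlam : lam = -Real.cos x₂ / Real.cos x₁) :
    (1 - lam) ^ 3 * Real.sin (x₁ + x₂) - lam ^ 3 * Real.sin x₁ + Real.sin x₂ = 0 ↔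
      Real.sin (x₁ + x₂) * ((Real.cos x₁ + Real.cos x₂) ^ 3 + Real.cos x₁ ^ 2
          + Real.cos x₂ ^ 2 - Real.cos x₁ * Real.cos x₂ * Real.cos (x₁ - x₂)) = 0 := by
  have hlam_mul : lam * cos x₁ = -cos x₂ := by rw [hlam, div_mul_cancel₀ _ hc]
  rw [← cos_pow_three_mul_cubic_coefficient hlam_mul, mul_eq_zero, or_iff_right (pow_ne_zero 3 hc)]
end

section
/- Let A, B ∈ ℝ satisfy cos²B > 1/2, sin(2B) ≠ 0, and sin²A = cos²B·(1 − |sin 2B|)/(2cos²B − 1). Then cos²B·(1 − 2cos²B) + sin²A < 0, i.e. −2cos⁴B − cos²A + cos²B + 1 < 0. -/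
open Real

/-! With `c = cos²B` and `s = |sin 2B|` one has `s² + (2c - 1)² = 1`, so `(2c - 1)² = 1 - s²`.
Multiplying the claim by `2c - 1 > 0` it becomes `c (1 - s) < c (2c - 1)² = c (1 - s²)`, which holds
because `0 < s < 1`. The second inequality is the first one rewritten with `cos²A = 1 - sin²A`. -/

theorem sq_abs_sin_two_mul_add_sq (x : ℝ) :
    |sin (2 * x)| ^ 2 + (2 * cos x ^ 2 - 1) ^ 2 = 1 := by
  rw [sq_abs, ← cos_two_mul, sin_sq_add_cos_sq]

theorem one_sub_lt_sq_of_sq_add_sq_eq_one {s d : ℝ} (hs : 0 < s) (hd : 0 < d)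
    (h : s ^ 2 + d ^ 2 = 1) : 1 - s < d ^ 2 := by
  have hs1 : s < 1 := by nlinarith
  nlinarith

/-- Case (I) of the appendix: if `cos²B > 1/2`, `sin 2B ≠ 0` and
`sin²A = cos²B(1 - |sin 2B|)/(2cos²B - 1)`, then
`cos²B(1 - 2cos²B) + sin²A < 0`, i.e. `-2cos⁴B - cos²A + cos²B + 1 < 0`. -/
theorem hex_appendix_case_one (A B : ℝ) (h1 : 1 / 2 < Real.cos B ^ 2)
    (h2 : Real.sin (2 * B) ≠ 0)
    (h3 : Real.sin A ^ 2
      = Real.cos B ^ 2 * (1 - |Real.sin (2 * B)|) / (2 * Real.cos B ^ 2 - 1)) :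
    Real.cos B ^ 2 * (1 - 2 * Real.cos B ^ 2) + Real.sin A ^ 2 < 0 ∧
      -2 * Real.cos B ^ 4 - Real.cos A ^ 2 + Real.cos B ^ 2 + 1 < 0 := by
  have hd : 0 < 2 * cos B ^ 2 - 1 := by linarith
  have hlt : 1 - |sin (2 * B)| < (2 * cos B ^ 2 - 1) ^ 2 :=
    one_sub_lt_sq_of_sq_add_sq_eq_one (abs_pos.2 h2) hd (sq_abs_sin_two_mul_add_sq B)
  have key : cos B ^ 2 * (1 - 2 * cos B ^ 2) + sin A ^ 2 < 0 := by
    rw [h3, ← lt_neg_iff_add_neg', div_lt_iff₀ hd]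
    nlinarith
  exact ⟨key, by linarith [sin_sq_add_cos_sq A]⟩
end
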